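/- arXiv:2112.07949 — 4 statements merged into one kernel-verified Lean document; each statement's English description precedes it below -/
import Mathlib

section
/- Solutions of the angular sub-problem decay exponentially: if f : ℝ → L²(Ω × S²) is differentiable with f'(t) = −A(f(t)) for all t, where A is the bounded linear operator on L²(Ω × S²) induced by the removal operator K_σ, then for every t ≥ 0, ‖f(t)‖ ≤ e^{−σ̲_a t} ‖f(0)‖, where ‖·‖ denotes the L² norm on Ω × S². -/
/-!
Dissipativity drives the decay: `⟪K_σ u, u⟫ ≥ σ̲_a ‖u‖²`, so `t ↦ e^{2 σ̲_a t} ‖f t‖²` has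
nonpositive derivative. The absorption term contributes at least `σ̲_a ‖u‖²`. The scattering term
is nonnegative because for a symmetric kernel with unit row integrals
`2 |(Ku)(s) u(s)| ≤ ∫ Φ(s,s') (u(s')² + u(s)²) ds'`, and integrating over `s` (using the symmetry
for the first summand) bounds `∫ |Ku · u|` by `∫ u²`.
-/

open MeasureTheory Metric Real
open scoped ENNReal RealInnerProductSpace

noncomputable section

/-- The ambient Euclidean space `ℝ³`. -/
abbrev E3 := EuclideanSpace ℝ (Fin 3)

/-- The unit sphere `S² ⊆ ℝ³`. -/
abbrev S2 := Metric.sphere (0 : E3) 1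

/-- The surface measure on the unit sphere `S²`. -/
def sphereMeasure : Measure S2 := (volume : Measure E3).toSphere

/-- The scattering operator `(Kv)(x,s) = ∫_{S²} Φ(s,s') v(x,s') dσ(s')`. -/
def scatK (Φ : S2 → S2 → ℝ) (v : E3 × S2 → ℝ) : E3 × S2 → ℝ :=
  fun p => ∫ s', Φ p.2 s' * v (p.1, s') ∂sphereMeasure

/-- The product measure on `Ω × S²` (Lebesgue measure restricted to `Ω` times the
surface measure on `S²`). -/
def rteMeasure (Ω : Set E3) : Measure (E3 × S2) :=
  ((volume : Measure E3).restrict Ω).prod sphereMeasure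

/-- The removal operator `(K_σ v)(x,s) = σ_a(x) v(x,s) + σ_s(x) (v(x,s) - (Kv)(x,s))`. -/
def removalK (Φ : S2 → S2 → ℝ) (σa σs : E3 → ℝ) (v : E3 × S2 → ℝ) : E3 × S2 → ℝ :=
  fun p => σa p.1 * v p + σs p.1 * (v p - scatK Φ v p)

instance : IsFiniteMeasure sphereMeasure := by unfold sphereMeasure; infer_instance

theorem norm_le_exp_mul_norm_of_inner_deriv_le {E : Type*} [NormedAddCommGroup E]
    [InnerProductSpace ℝ E] {f f' : ℝ → E} {c s t : ℝ} (hf : ∀ τ, HasDerivAt f (f' τ) τ)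
    (hdiss : ∀ τ, ⟪f' τ, f τ⟫ ≤ -(c * ‖f τ‖ ^ 2)) (hst : s ≤ t) :
    ‖f t‖ ≤ exp (-(c * (t - s))) * ‖f s‖ := by
  set F : ℝ → ℝ := fun τ => exp (2 * c * τ) * ‖f τ‖ ^ 2
  have hF : ∀ τ, HasDerivAt F
      (exp (2 * c * τ) * (2 * c) * ‖f τ‖ ^ 2 + exp (2 * c * τ) * (2 * ⟪f τ, f' τ⟫)) τ :=
    fun τ => by
      simpa using (((hasDerivAt_id' τ).const_mul (2 * c)).exp).fun_mul (hf τ).norm_sq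
  have hanti : Antitone F := by
    refine antitone_of_deriv_nonpos (fun τ => (hF τ).differentiableAt) fun τ => ?_
    rw [(hF τ).deriv, real_inner_comm]
    nlinarith [hdiss τ, exp_pos (2 * c * τ)]
  have hsq : (exp (c * t) * ‖f t‖) ^ 2 ≤ (exp (c * s) * ‖f s‖) ^ 2 := by
    simpa only [F, mul_pow, ← exp_nat_mul, Nat.cast_ofNat, mul_assoc] using hanti hst
  have hle : exp (c * t) * ‖f t‖ ≤ exp (c * s) * ‖f s‖ :=
    (pow_le_pow_iff_left₀ (by positivity) (by positivity) two_ne_zero).mp hsq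
  rw [mul_sub, neg_sub, exp_sub, div_mul_eq_mul_div, le_div_iff₀ (exp_pos _), mul_comm]
  exact hle

lemma MeasureTheory.L2.real_inner_eq_integral_mul {α : Type*} [MeasurableSpace α] {μ : Measure α}
    (f g : Lp ℝ 2 μ) : ⟪f, g⟫ = ∫ a, f a * g a ∂μ := by
  simp [L2.inner_def, mul_comm]

lemma two_mul_enorm_mul_le_enorm_sq_add (a b : ℝ) : 2 * (‖a‖ₑ * ‖b‖ₑ) ≤ ‖a‖ₑ ^ 2 + ‖b‖ₑ ^ 2 := by
  simp only [enorm_eq_nnnorm, ← mul_assoc]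
  exact_mod_cast two_mul_le_add_sq ‖a‖₊ ‖b‖₊

section KernelBound

variable {S : Type*} [MeasurableSpace S] {ν : Measure S} {Φ : S → S → ℝ}

lemma lintegral_enorm_eq_one_of_integral_eq_one {s : S} (hpos : ∀ s', 0 ≤ Φ s s')
    (hnorm : ∫ s', Φ s s' ∂ν = 1) : ∫⁻ s', ‖Φ s s'‖ₑ ∂ν = 1 := by
  have hint : Integrable (Φ s) ν := Integrable.of_integral_ne_zero (by simp [hnorm])
  rw [← ofReal_integral_norm_eq_lintegral_enorm hint]
  simp [Real.norm_of_nonneg (hpos _), hnorm]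

variable [SFinite ν]

lemma lintegral_lintegral_enorm_mul_eq (hΦ : Measurable (Function.uncurry Φ))
    (hsymm : ∀ s s', Φ s s' = Φ s' s) (hnorm : ∀ s, ∫⁻ s', ‖Φ s s'‖ₑ ∂ν = 1)
    {g : S → ℝ≥0∞} (hg : Measurable g) :
    ∫⁻ s, ∫⁻ s', ‖Φ s s'‖ₑ * g s' ∂ν ∂ν = ∫⁻ s, g s ∂ν := by
  rw [lintegral_lintegral_swap (by fun_prop)]
  refine lintegral_congr fun s' => ?_
  rw [lintegral_mul_const _ (by fun_prop)]
  simp only [hsymm _ s', hnorm, one_mul]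

lemma lintegral_enorm_integral_mul_le (hΦ : Measurable (Function.uncurry Φ))
    (hsymm : ∀ s s', Φ s s' = Φ s' s) (hnorm : ∀ s, ∫⁻ s', ‖Φ s s'‖ₑ ∂ν = 1)
    {v : S → ℝ} (hv : Measurable v) :
    ∫⁻ s, ‖∫ s', Φ s s' * v s' ∂ν‖ₑ * ‖v s‖ₑ ∂ν ≤ ∫⁻ s, ‖v s‖ₑ ^ 2 ∂ν := by
  have hpt : ∀ s, ‖∫ s', Φ s s' * v s' ∂ν‖ₑ * ‖v s‖ₑ ≤
      ∫⁻ s', ‖Φ s s'‖ₑ * (‖v s'‖ₑ * ‖v s‖ₑ) ∂ν := fun s => calc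
    _ ≤ (∫⁻ s', ‖Φ s s' * v s'‖ₑ ∂ν) * ‖v s‖ₑ := by
      gcongr; exact enorm_integral_le_lintegral_enorm _
    _ = _ := by
      rw [← lintegral_mul_const' _ _ enorm_ne_top]
      simp only [enorm_mul, mul_assoc]
  have hdiag : ∀ s, ∫⁻ s', ‖Φ s s'‖ₑ * ‖v s‖ₑ ^ 2 ∂ν = ‖v s‖ₑ ^ 2 := fun s => by
    rw [lintegral_mul_const _ (by fun_prop), hnorm, one_mul]
  refine (ENNReal.mul_le_mul_iff_right two_ne_zero ENNReal.ofNat_ne_top).mp ?_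
  calc 2 * ∫⁻ s, ‖∫ s', Φ s s' * v s' ∂ν‖ₑ * ‖v s‖ₑ ∂ν
      ≤ 2 * ∫⁻ s, ∫⁻ s', ‖Φ s s'‖ₑ * (‖v s'‖ₑ * ‖v s‖ₑ) ∂ν ∂ν := by
        gcongr with s; exact hpt s
    _ = ∫⁻ s, ∫⁻ s', ‖Φ s s'‖ₑ * (2 * (‖v s'‖ₑ * ‖v s‖ₑ)) ∂ν ∂ν := by
        simp only [mul_left_comm _ (2 : ℝ≥0∞), lintegral_const_mul' _ _ ENNReal.ofNat_ne_top]
    _ ≤ ∫⁻ s, ∫⁻ s', ‖Φ s s'‖ₑ * (‖v s'‖ₑ ^ 2 + ‖v s‖ₑ ^ 2) ∂ν ∂ν := by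
        gcongr with s s'
        exact two_mul_enorm_mul_le_enorm_sq_add _ _
    _ = ∫⁻ s, ∫⁻ s', ‖Φ s s'‖ₑ * ‖v s'‖ₑ ^ 2 ∂ν ∂ν + ∫⁻ s, ‖v s‖ₑ ^ 2 ∂ν := by
        simp only [mul_add]
        rw [← lintegral_add_right _ (by fun_prop)]
        refine lintegral_congr fun s => ?_
        rw [lintegral_add_left (by fun_prop), hdiag]
    _ = 2 * ∫⁻ s, ‖v s‖ₑ ^ 2 ∂ν := by
        rw [lintegral_lintegral_enorm_mul_eq hΦ hsymm hnorm (by fun_prop), two_mul]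

end KernelBound

section Scattering

variable {ρ : Measure E3} {Φ : S2 → S2 → ℝ} {σ : E3 → ℝ} {u : E3 × S2 → ℝ}

lemma lintegral_enorm_mul_scatK_mul_le (hΦ : Measurable (Function.uncurry Φ))
    (hsymm : ∀ s s', Φ s s' = Φ s' s) (hnorm : ∀ s, ∫⁻ s', ‖Φ s s'‖ₑ ∂sphereMeasure = 1)
    (hσ : Measurable σ) (hu : Measurable u) :
    ∫⁻ p, ‖σ p.1 * (scatK Φ u p * u p)‖ₑ ∂ρ.prod sphereMeasure ≤
      ∫⁻ p, ‖σ p.1 * u p ^ 2‖ₑ ∂ρ.prod sphereMeasure := calc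
  _ ≤ ∫⁻ x, ∫⁻ s, ‖σ x * (scatK Φ u (x, s) * u (x, s))‖ₑ ∂sphereMeasure ∂ρ := lintegral_prod_le _
  _ = ∫⁻ x, ‖σ x‖ₑ * ∫⁻ s, ‖scatK Φ u (x, s)‖ₑ * ‖u (x, s)‖ₑ ∂sphereMeasure ∂ρ := by
    simp only [enorm_mul, lintegral_const_mul' _ _ enorm_ne_top]
  _ ≤ ∫⁻ x, ‖σ x‖ₑ * ∫⁻ s, ‖u (x, s)‖ₑ ^ 2 ∂sphereMeasure ∂ρ :=
    lintegral_mono fun x => mul_le_mul_right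
      (lintegral_enorm_integral_mul_le hΦ hsymm hnorm (hu.comp measurable_prodMk_left)) _
  _ = _ := by
    have hmeas : Measurable fun p : E3 × S2 => ‖σ p.1 * u p ^ 2‖ₑ := by fun_prop
    rw [lintegral_prod _ hmeas.aemeasurable]
    simp only [enorm_mul, enorm_pow, lintegral_const_mul' _ _ enorm_ne_top]

lemma stronglyMeasurable_scatK (hΦ : Measurable (Function.uncurry Φ))
    (hu : StronglyMeasurable u) : StronglyMeasurable (scatK Φ u) := by
  have hΦ' : Measurable fun q : (E3 × S2) × S2 => Φ q.1.2 q.2 :=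
    hΦ.comp (measurable_fst.snd.prodMk measurable_snd)
  exact (hΦ'.stronglyMeasurable.mul
    (hu.comp_measurable (measurable_fst.fst.prodMk measurable_snd))).integral_prod_right'

lemma MeasureTheory.Integrable.mul_scatK_mul
    (hint : Integrable (fun p => σ p.1 * u p ^ 2) (ρ.prod sphereMeasure))
    (hΦ : Measurable (Function.uncurry Φ))
    (hsymm : ∀ s s', Φ s s' = Φ s' s) (hnorm : ∀ s, ∫⁻ s', ‖Φ s s'‖ₑ ∂sphereMeasure = 1)
    (hσ : Measurable σ) (hu : StronglyMeasurable u) :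
    Integrable (fun p => σ p.1 * (scatK Φ u p * u p)) (ρ.prod sphereMeasure) :=
  ⟨(hσ.comp measurable_fst).aestronglyMeasurable.mul
      ((stronglyMeasurable_scatK hΦ hu).aestronglyMeasurable.mul hu.aestronglyMeasurable),
    (lintegral_enorm_mul_scatK_mul_le hΦ hsymm hnorm hσ hu.measurable).trans_lt hint.2⟩

lemma integral_mul_scatK_mul_le (hΦ : Measurable (Function.uncurry Φ))
    (hsymm : ∀ s s', Φ s s' = Φ s' s) (hnorm : ∀ s, ∫⁻ s', ‖Φ s s'‖ₑ ∂sphereMeasure = 1)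
    (hσ : Measurable σ) (hσ0 : ∀ᵐ x ∂ρ, 0 ≤ σ x) (hu : StronglyMeasurable u)
    (hint : Integrable (fun p => σ p.1 * u p ^ 2) (ρ.prod sphereMeasure)) :
    ∫ p, σ p.1 * (scatK Φ u p * u p) ∂ρ.prod sphereMeasure ≤
      ∫ p, σ p.1 * u p ^ 2 ∂ρ.prod sphereMeasure := calc
  _ ≤ ∫ p, ‖σ p.1 * (scatK Φ u p * u p)‖ ∂ρ.prod sphereMeasure :=
    (Real.le_norm_self _).trans (norm_integral_le_integral_norm _)
  _ ≤ ∫ p, ‖σ p.1 * u p ^ 2‖ ∂ρ.prod sphereMeasure := by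
    rw [integral_norm_eq_lintegral_enorm (hint.mul_scatK_mul hΦ hsymm hnorm hσ hu).1,
      integral_norm_eq_lintegral_enorm hint.1]
    exact ENNReal.toReal_mono hint.2.ne
      (lintegral_enorm_mul_scatK_mul_le hΦ hsymm hnorm hσ hu.measurable)
  _ = _ := by
    refine integral_congr_ae ?_
    filter_upwards [Measure.quasiMeasurePreserving_fst.ae hσ0] with p hp
    exact Real.norm_of_nonneg (mul_nonneg hp (sq_nonneg _))

lemma integral_removalK_mul_ge (hΦ : Measurable (Function.uncurry Φ))
    (hsymm : ∀ s s', Φ s s' = Φ s' s) (hnorm : ∀ s, ∫⁻ s', ‖Φ s s'‖ₑ ∂sphereMeasure = 1)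
    {σa σs : E3 → ℝ} (hσa : Measurable σa) (hσs : Measurable σs) {c C C' : ℝ}
    (hσa_bound : ∀ᵐ x ∂ρ, c ≤ σa x ∧ σa x ≤ C) (hσs_bound : ∀ᵐ x ∂ρ, 0 ≤ σs x ∧ σs x ≤ C')
    (hu : StronglyMeasurable u) (hu2 : MemLp u 2 (ρ.prod sphereMeasure)) :
    c * ∫ p, u p ^ 2 ∂ρ.prod sphereMeasure ≤
      ∫ p, removalK Φ σa σs u p * u p ∂ρ.prod sphereMeasure := by
  have hσa' := (Measure.quasiMeasurePreserving_fst (ν := sphereMeasure)).ae hσa_bound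
  have hσs' := (Measure.quasiMeasurePreserving_fst (ν := sphereMeasure)).ae hσs_bound
  have hsq := hu2.integrable_sq
  have hA : Integrable (fun p => σa p.1 * u p ^ 2) (ρ.prod sphereMeasure) :=
    hsq.bdd_mul (c := max |c| |C|) (hσa.comp measurable_fst).aestronglyMeasurable
      (by filter_upwards [hσa'] with p hp using abs_le_max_abs_abs hp.1 hp.2)
  have hS : Integrable (fun p => σs p.1 * u p ^ 2) (ρ.prod sphereMeasure) :=
    hsq.bdd_mul (c := C') (hσs.comp measurable_fst).aestronglyMeasurable
      (by filter_upwards [hσs'] with p hp using (abs_of_nonneg hp.1).trans_le hp.2)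
  have hK := hS.mul_scatK_mul hΦ hsymm hnorm hσs hu
  calc c * ∫ p, u p ^ 2 ∂ρ.prod sphereMeasure
      ≤ ∫ p, σa p.1 * u p ^ 2 ∂ρ.prod sphereMeasure := by
        rw [← integral_const_mul]
        refine integral_mono_ae (hsq.const_mul c) hA ?_
        filter_upwards [hσa'] with p hp using mul_le_mul_of_nonneg_right hp.1 (sq_nonneg _)
    _ ≤ ∫ p, σa p.1 * u p ^ 2 ∂ρ.prod sphereMeasure + (∫ p, σs p.1 * u p ^ 2 ∂ρ.prod sphereMeasure
          - ∫ p, σs p.1 * (scatK Φ u p * u p) ∂ρ.prod sphereMeasure) := by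
        linarith [integral_mul_scatK_mul_le hΦ hsymm hnorm hσs
          (hσs_bound.mono fun _ hx => hx.1) hu hS]
    _ = _ := by
        have hSK : Integrable (fun p => σs p.1 * u p ^ 2 - σs p.1 * (scatK Φ u p * u p))
            (ρ.prod sphereMeasure) := hS.sub hK
        rw [← integral_sub hS hK, ← integral_add hA hSK]
        congr 1 with p
        simp only [removalK]
        ring

end Scattering

theorem angular_subproblem_decay_general
    (Ω : Set E3)
    (Φ : S2 → S2 → ℝ)
    (hΦmeas : Measurable (Function.uncurry Φ))
    (hΦpos : ∀ s s', 0 ≤ Φ s s')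
    (hΦsymm : ∀ s s', Φ s s' = Φ s' s)
    (hΦnorm : ∀ s, (∫ s', Φ s s' ∂sphereMeasure) = 1)
    (σa σs : E3 → ℝ) (hσa_meas : Measurable σa) (hσs_meas : Measurable σs)
    (σa_lo σa_hi σs_hi : ℝ)
    (hσs_bound : ∀ᵐ x ∂(volume : Measure E3).restrict Ω, 0 ≤ σs x ∧ σs x ≤ σs_hi)
    (hσa_bound : ∀ᵐ x ∂(volume : Measure E3).restrict Ω, σa_lo ≤ σa x ∧ σa x ≤ σa_hi)
    (A : Lp ℝ 2 (rteMeasure Ω) →L[ℝ] Lp ℝ 2 (rteMeasure Ω))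
    (hA : ∀ g : Lp ℝ 2 (rteMeasure Ω),
      (A g : E3 × S2 → ℝ) =ᵐ[rteMeasure Ω] removalK Φ σa σs g)
    (f : ℝ → Lp ℝ 2 (rteMeasure Ω))
    (hf : ∀ t : ℝ, HasDerivAt f (-(A (f t))) t) :
    ∀ t : ℝ, 0 ≤ t → ‖f t‖ ≤ Real.exp (-(σa_lo * t)) * ‖f 0‖ := by
  have hnorm s := lintegral_enorm_eq_one_of_integral_eq_one (hΦpos s) (hΦnorm s)
  have hcoer (g : Lp ℝ 2 (rteMeasure Ω)) : σa_lo * ‖g‖ ^ 2 ≤ ⟪A g, g⟫ := by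
    have hAg : ∫ p, A g p * g p ∂rteMeasure Ω = ∫ p, removalK Φ σa σs g p * g p ∂rteMeasure Ω :=
      integral_congr_ae ((hA g).mul (ae_eq_refl _))
    rw [← real_inner_self_eq_norm_sq, L2.real_inner_eq_integral_mul, L2.real_inner_eq_integral_mul,
      hAg]
    simp only [← sq]
    exact integral_removalK_mul_ge hΦmeas hΦsymm hnorm hσa_meas hσs_meas
      hσa_bound hσs_bound (Lp.stronglyMeasurable g) (Lp.memLp g)
  intro t ht
  simpa using norm_le_exp_mul_norm_of_inner_deriv_le hf
    (fun τ => by rw [inner_neg_left]; linarith [hcoer (f τ)]) ht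

/-- exponential decay for the angular sub-problem: if
`f'(t) = −A (f t)` for all `t`, where `A` is the bounded linear operator on
`L²(Ω × S²)` induced by the removal operator `K_σ`, then
`‖f t‖ ≤ e^{−σ̲_a t} ‖f 0‖` for all `t ≥ 0`. -/
theorem angular_subproblem_decay
    (Ω : Set E3) (hΩo : IsOpen Ω) (hΩb : Bornology.IsBounded Ω)
    (Φ : S2 → S2 → ℝ)
    (hΦmeas : Measurable (Function.uncurry Φ))
    (hΦpos : ∀ s s', 0 ≤ Φ s s')
    (hΦsymm : ∀ s s', Φ s s' = Φ s' s)
    (hΦnorm : ∀ s, (∫ s', Φ s s' ∂sphereMeasure) = 1)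
    (σa σs : E3 → ℝ) (hσa_meas : Measurable σa) (hσs_meas : Measurable σs)
    (σa_lo σa_hi σs_hi : ℝ)
    (hσa_lo_pos : 0 < σa_lo) (hσa_hi_pos : 0 < σa_hi) (hσs_hi_pos : 0 < σs_hi)
    (hσs_bound : ∀ᵐ x ∂(volume : Measure E3).restrict Ω, 0 ≤ σs x ∧ σs x ≤ σs_hi)
    (hσa_bound : ∀ᵐ x ∂(volume : Measure E3).restrict Ω, σa_lo ≤ σa x ∧ σa x ≤ σa_hi)
    (A : Lp ℝ 2 (rteMeasure Ω) →L[ℝ] Lp ℝ 2 (rteMeasure Ω))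
    (hA : ∀ g : Lp ℝ 2 (rteMeasure Ω),
      (A g : E3 × S2 → ℝ) =ᵐ[rteMeasure Ω] removalK Φ σa σs g)
    (f : ℝ → Lp ℝ 2 (rteMeasure Ω))
    (hf : ∀ t : ℝ, HasDerivAt f (-(A (f t))) t) :
    ∀ t : ℝ, 0 ≤ t → ‖f t‖ ≤ Real.exp (-(σa_lo * t)) * ‖f 0‖ :=
  angular_subproblem_decay_general Ω Φ hΦmeas hΦpos hΦsymm hΦnorm σa σs hσa_meas hσs_meas σa_lo
    σa_hi σs_hi hσs_bound hσa_bound A hA f hf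
end
end

section
/- Energy estimate for the implicit Euler step of the angular sub-problem: if Δt > 0 and ũ, u ∈ L²(Ω × S²) satisfy ũ + Δt K_σ ũ = u, then ‖ũ‖² + ‖ũ − u‖² + 2 Δt σ̲_a ‖ũ‖² ≤ ‖u‖²; in particular ‖ũ‖ ≤ ‖u‖. Here ‖·‖ denotes the L² norm on Ω × S². -/
open MeasureTheory Metric Real
open scoped ENNReal RealInnerProductSpace

noncomputable section

/-! Testing the equation against `ũ` gives `⟨ũ, u - ũ⟩ = Δt ⟨ũ, K_σ ũ⟩`, and expanding
`‖u‖² = ‖ũ‖² + 2 ⟨ũ, u - ũ⟩ + ‖ũ - u‖²` reduces the estimate to the coercivity bound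
`⟨ũ, K_σ ũ⟩ ≥ σ̲_a ‖ũ‖²`. Absorption contributes at least `σ̲_a ‖ũ‖²`; scattering contributes
`⟨v, v - K v⟩ ≥ 0` for `v = √σ_s ũ` (the weight depends on `x` only, so it commutes with `K`).
That form is nonnegative because `2 Φ(s,s') v(s) v(s') ≤ Φ(s,s') (v(s)² + v(s')²)`, and by the
symmetry of `Φ` and its unit row integrals both terms on the right integrate to `‖v‖²`. -/

structure IsSymmetricMarkovKernel {β : Type*} [MeasurableSpace β] (ν : Measure β)
    (Φ : β → β → ℝ) : Prop where
  measurable : Measurable (Function.uncurry Φ)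
  nonneg : ∀ s s', 0 ≤ Φ s s'
  symm : ∀ s s', Φ s s' = Φ s' s
  integral_eq_one : ∀ s, ∫ s', Φ s s' ∂ν = 1

lemma abs_mul_mul_le {c : ℝ} (hc : 0 ≤ c) (a b : ℝ) :
    |a * (c * b)| ≤ (a ^ 2 * c + b ^ 2 * c) / 2 :=
  abs_le.2 ⟨by nlinarith [mul_nonneg hc (sq_nonneg (a + b))],
    by nlinarith [mul_nonneg hc (sq_nonneg (a - b))]⟩

section SymmetricKernel

variable {α β : Type*} [MeasurableSpace α] [MeasurableSpace β] {μ : Measure α} {ν : Measure β}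
  {Φ : β → β → ℝ} {g : α × β → ℝ}

lemma IsSymmetricMarkovKernel.integrable (hΦ : IsSymmetricMarkovKernel ν Φ) (s : β) :
    Integrable (Φ s) ν :=
  Integrable.of_integral_ne_zero (by rw [hΦ.integral_eq_one]; exact one_ne_zero)

def MeasurableEquiv.prodSwapLast : (α × β) × β ≃ᵐ (α × β) × β :=
  (MeasurableEquiv.prodAssoc.trans
    ((MeasurableEquiv.refl α).prodCongr MeasurableEquiv.prodComm)).trans
    MeasurableEquiv.prodAssoc.symm

@[simp]
lemma MeasurableEquiv.prodSwapLast_apply (z : (α × β) × β) :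
    MeasurableEquiv.prodSwapLast z = ((z.1.1, z.2), z.1.2) := rfl

variable [SFinite ν]

lemma IsSymmetricMarkovKernel.integrable_mul_kernel (hΦ : IsSymmetricMarkovKernel ν Φ)
    (hg : Integrable g (μ.prod ν)) :
    Integrable (fun z : (α × β) × β => g z.1 * Φ z.1.2 z.2) ((μ.prod ν).prod ν) := by
  have hmeas : AEStronglyMeasurable (fun z : (α × β) × β => g z.1 * Φ z.1.2 z.2)
      ((μ.prod ν).prod ν) :=
    (hg.1.comp_quasiMeasurePreserving Measure.quasiMeasurePreserving_fst).mul
      (hΦ.measurable.comp (measurable_fst.snd.prodMk measurable_snd)).aestronglyMeasurable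
  refine (integrable_prod_iff hmeas).2
    ⟨ae_of_all _ fun p => (hΦ.integrable p.2).const_mul (g p),
      hg.norm.congr (ae_of_all _ fun p => ?_)⟩
  simp only [norm_mul, Real.norm_of_nonneg (hΦ.nonneg _ _)]
  rw [integral_const_mul, hΦ.integral_eq_one, mul_one]

variable [SFinite μ]

lemma measurePreserving_prodSwapLast :
    MeasurePreserving MeasurableEquiv.prodSwapLast ((μ.prod ν).prod ν) ((μ.prod ν).prod ν) :=
  ((measurePreserving_prodAssoc μ ν ν).trans
    ((MeasurePreserving.id μ).prod Measure.measurePreserving_swap)).trans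
    (measurePreserving_prodAssoc μ ν ν).symm

namespace IsSymmetricMarkovKernel

lemma integral_mul_kernel (hΦ : IsSymmetricMarkovKernel ν Φ) (hg : Integrable g (μ.prod ν)) :
    ∫ z, g z.1 * Φ z.1.2 z.2 ∂((μ.prod ν).prod ν) = ∫ p, g p ∂(μ.prod ν) := by
  rw [integral_prod _ (hΦ.integrable_mul_kernel hg)]
  simp only [integral_const_mul, hΦ.integral_eq_one, mul_one]

lemma integrable_mul_kernel' (hΦ : IsSymmetricMarkovKernel ν Φ) (hg : Integrable g (μ.prod ν)) :
    Integrable (fun z : (α × β) × β => g (z.1.1, z.2) * Φ z.1.2 z.2) ((μ.prod ν).prod ν) := by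
  refine ((measurePreserving_prodSwapLast.integrable_comp_emb
    (MeasurableEquiv.measurableEmbedding _)).2 (hΦ.integrable_mul_kernel hg)).congr
    (ae_of_all _ fun z => ?_)
  simp [hΦ.symm z.2]

lemma integral_mul_kernel' (hΦ : IsSymmetricMarkovKernel ν Φ) (hg : Integrable g (μ.prod ν)) :
    ∫ z, g (z.1.1, z.2) * Φ z.1.2 z.2 ∂((μ.prod ν).prod ν) = ∫ p, g p ∂(μ.prod ν) := by
  rw [← hΦ.integral_mul_kernel hg, ← measurePreserving_prodSwapLast.integral_comp']
  simp [hΦ.symm]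

lemma integrable_mul_kernel_mul (hΦ : IsSymmetricMarkovKernel ν Φ) (hg : MemLp g 2 (μ.prod ν)) :
    Integrable (fun z : (α × β) × β => g z.1 * (Φ z.1.2 z.2 * g (z.1.1, z.2)))
      ((μ.prod ν).prod ν) := by
  have hfst := Measure.quasiMeasurePreserving_fst (μ := μ.prod ν) (ν := ν)
  have hmeas : AEStronglyMeasurable (fun z : (α × β) × β => g z.1 * (Φ z.1.2 z.2 * g (z.1.1, z.2)))
      ((μ.prod ν).prod ν) :=
    (hg.1.comp_quasiMeasurePreserving hfst).mul
      ((hΦ.measurable.comp (measurable_fst.snd.prodMk measurable_snd)).aestronglyMeasurable.mul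
        (hg.1.comp_quasiMeasurePreserving
          (hfst.comp measurePreserving_prodSwapLast.quasiMeasurePreserving)))
  exact (((hΦ.integrable_mul_kernel hg.integrable_sq).add
    (hΦ.integrable_mul_kernel' hg.integrable_sq)).div_const 2).mono' hmeas
    (ae_of_all _ fun z => abs_mul_mul_le (hΦ.nonneg _ _) _ _)

lemma integrable_mul_integral (hΦ : IsSymmetricMarkovKernel ν Φ) (hg : MemLp g 2 (μ.prod ν)) :
    Integrable (fun p => g p * ∫ s', Φ p.2 s' * g (p.1, s') ∂ν) (μ.prod ν) := by
  simpa only [integral_const_mul] using (hΦ.integrable_mul_kernel_mul hg).integral_prod_left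

lemma integral_mul_integral_le (hΦ : IsSymmetricMarkovKernel ν Φ) (hg : MemLp g 2 (μ.prod ν)) :
    ∫ p, g p * (∫ s', Φ p.2 s' * g (p.1, s') ∂ν) ∂(μ.prod ν) ≤ ∫ p, g p ^ 2 ∂(μ.prod ν) := by
  have hA := hΦ.integrable_mul_kernel hg.integrable_sq
  have hB := hΦ.integrable_mul_kernel' hg.integrable_sq
  calc ∫ p, g p * (∫ s', Φ p.2 s' * g (p.1, s') ∂ν) ∂(μ.prod ν)
      = ∫ z, g z.1 * (Φ z.1.2 z.2 * g (z.1.1, z.2)) ∂((μ.prod ν).prod ν) := by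
        rw [integral_prod _ (hΦ.integrable_mul_kernel_mul hg)]
        simp only [integral_const_mul]
    _ ≤ ∫ z, (g z.1 ^ 2 * Φ z.1.2 z.2 + g (z.1.1, z.2) ^ 2 * Φ z.1.2 z.2) / 2
          ∂((μ.prod ν).prod ν) :=
        integral_mono (hΦ.integrable_mul_kernel_mul hg) ((hA.add hB).div_const 2)
          fun z => (le_abs_self _).trans (abs_mul_mul_le (hΦ.nonneg _ _) _ _)
    _ = ∫ p, g p ^ 2 ∂(μ.prod ν) := by
        rw [integral_div, integral_add hA hB, hΦ.integral_mul_kernel hg.integrable_sq,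
          hΦ.integral_mul_kernel' hg.integrable_sq]
        ring

end IsSymmetricMarkovKernel

end SymmetricKernel

lemma memLp_sqrt_mul {α β : Type*} [MeasurableSpace α] [MeasurableSpace β] {μ : Measure α}
    {ν : Measure β} {w : α → ℝ} {c : ℝ} {f : α × β → ℝ} (hw_meas : Measurable w)
    (hw : ∀ᵐ x ∂μ, w x ≤ c) (hf : MemLp f 2 (μ.prod ν)) :
    MemLp (fun p => √(w p.1) * f p) 2 (μ.prod ν) := by
  refine hf.of_le_mul (c := √c)
    (((hw_meas.comp measurable_fst).sqrt.aestronglyMeasurable).mul hf.1) ?_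
  filter_upwards [Measure.quasiMeasurePreserving_fst.ae hw] with p hp
  rw [norm_mul, Real.norm_of_nonneg (Real.sqrt_nonneg _)]
  exact mul_le_mul_of_nonneg_right (Real.sqrt_le_sqrt hp) (norm_nonneg _)

lemma integral_sq_expand {α : Type*} [MeasurableSpace α] {μ : Measure α} {f u : α → ℝ}
    (hf : MemLp f 2 μ) (hu : MemLp u 2 μ) :
    ∫ x, u x ^ 2 ∂μ =
      ∫ x, f x ^ 2 ∂μ + 2 * ∫ x, f x * (u x - f x) ∂μ + ∫ x, (f x - u x) ^ 2 ∂μ := by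
  have hcross : Integrable (fun x => 2 * (f x * (u x - f x))) μ :=
    (hf.integrable_mul (hu.sub hf)).const_mul 2
  have hsq : Integrable (fun x => (f x - u x) ^ 2) μ := (hf.sub hu).integrable_sq
  rw [← integral_const_mul, ← integral_add hf.integrable_sq hcross,
    ← integral_add (f := fun x => f x ^ 2 + 2 * (f x * (u x - f x)))
      (hf.integrable_sq.add hcross) hsq]
  exact integral_congr_ae (ae_of_all _ fun x => by ring)

lemma eLpNorm_two_le_of_integral_sq_le {α : Type*} [MeasurableSpace α] {μ : Measure α}
    {f u : α → ℝ} (hf : MemLp f 2 μ) (hu : MemLp u 2 μ)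
    (h : ∫ x, f x ^ 2 ∂μ ≤ ∫ x, u x ^ 2 ∂μ) : eLpNorm f 2 μ ≤ eLpNorm u 2 μ := by
  rw [hf.eLpNorm_eq_integral_rpow_norm two_ne_zero ENNReal.ofNat_ne_top,
    hu.eLpNorm_eq_integral_rpow_norm two_ne_zero ENNReal.ofNat_ne_top]
  simp only [ENNReal.toReal_ofNat, Real.rpow_two, Real.norm_eq_abs, sq_abs]
  exact ENNReal.ofReal_le_ofReal
    (Real.rpow_le_rpow (integral_nonneg fun _ => sq_nonneg _) h (by norm_num))

section RemovalOperator

variable {Φ : S2 → S2 → ℝ} {σa σs : E3 → ℝ} {ρ : Measure E3} {f : E3 × S2 → ℝ}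

lemma scatK_const_mul (c : E3 → ℝ) (p : E3 × S2) :
    scatK Φ (fun q => c q.1 * f q) p = c p.1 * scatK Φ f p := by
  simp only [scatK, mul_left_comm (Φ _ _), integral_const_mul]

lemma mul_sq_sub_mul_scatK_eq {p : E3 × S2} (hp : 0 ≤ σs p.1) :
    σs p.1 * (f p ^ 2 - f p * scatK Φ f p) =
      (√(σs p.1) * f p) ^ 2 - √(σs p.1) * f p * scatK Φ (fun q => √(σs q.1) * f q) p := by
  have hK : scatK Φ (fun q => √(σs q.1) * f q) p = √(σs p.1) * scatK Φ f p :=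
    scatK_const_mul (fun x => √(σs x)) p
  rw [hK]
  linear_combination (f p ^ 2 - f p * scatK Φ f p) * (Real.sq_sqrt hp).symm

variable [SFinite ρ] {c : ℝ}

lemma integrable_mul_sq_sub_mul_scatK (hΦ : IsSymmetricMarkovKernel sphereMeasure Φ)
    (hσs_meas : Measurable σs) (hσs : ∀ᵐ x ∂ρ, 0 ≤ σs x ∧ σs x ≤ c)
    (hf : MemLp f 2 (ρ.prod sphereMeasure)) :
    Integrable (fun p => σs p.1 * (f p ^ 2 - f p * scatK Φ f p)) (ρ.prod sphereMeasure) := by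
  have hg := memLp_sqrt_mul hσs_meas (hσs.mono fun _ hx => hx.2) hf
  have hK : Integrable (fun p => √(σs p.1) * f p * scatK Φ (fun q => √(σs q.1) * f q) p)
      (ρ.prod sphereMeasure) := hΦ.integrable_mul_integral hg
  refine (hg.integrable_sq.sub hK).congr ?_
  filter_upwards [Measure.quasiMeasurePreserving_fst.ae hσs] with p hp
  exact (mul_sq_sub_mul_scatK_eq hp.1).symm

lemma integral_mul_sq_sub_mul_scatK_nonneg (hΦ : IsSymmetricMarkovKernel sphereMeasure Φ)
    (hσs_meas : Measurable σs) (hσs : ∀ᵐ x ∂ρ, 0 ≤ σs x ∧ σs x ≤ c)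
    (hf : MemLp f 2 (ρ.prod sphereMeasure)) :
    0 ≤ ∫ p, σs p.1 * (f p ^ 2 - f p * scatK Φ f p) ∂(ρ.prod sphereMeasure) := by
  have hg := memLp_sqrt_mul hσs_meas (hσs.mono fun _ hx => hx.2) hf
  have hK : Integrable (fun p => √(σs p.1) * f p * scatK Φ (fun q => √(σs q.1) * f q) p)
      (ρ.prod sphereMeasure) := hΦ.integrable_mul_integral hg
  rw [integral_congr_ae ((Measure.quasiMeasurePreserving_fst.ae hσs).mono
    fun p hp => mul_sq_sub_mul_scatK_eq hp.1), integral_sub hg.integrable_sq hK, sub_nonneg]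
  exact hΦ.integral_mul_integral_le hg

lemma mul_integral_sq_le_integral_mul_removalK (hΦ : IsSymmetricMarkovKernel sphereMeasure Φ)
    (hσs_meas : Measurable σs) (hσs : ∀ᵐ x ∂ρ, 0 ≤ σs x ∧ σs x ≤ c) {a : ℝ}
    (hσa : ∀ᵐ x ∂ρ, a ≤ σa x) (hf : MemLp f 2 (ρ.prod sphereMeasure))
    (hfK : Integrable (fun p => f p * removalK Φ σa σs f p) (ρ.prod sphereMeasure)) :
    a * ∫ p, f p ^ 2 ∂(ρ.prod sphereMeasure) ≤
      ∫ p, f p * removalK Φ σa σs f p ∂(ρ.prod sphereMeasure) := by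
  have hsplit : ∀ p, f p * removalK Φ σa σs f p =
      σa p.1 * f p ^ 2 + σs p.1 * (f p ^ 2 - f p * scatK Φ f p) := fun p => by
    simp only [removalK]; ring
  have hscat := integrable_mul_sq_sub_mul_scatK hΦ hσs_meas hσs hf
  have habs : Integrable (fun p => σa p.1 * f p ^ 2) (ρ.prod sphereMeasure) :=
    (hfK.sub hscat).congr (ae_of_all _ fun p => by rw [Pi.sub_apply, hsplit]; ring)
  rw [integral_congr_ae (ae_of_all _ hsplit), integral_add habs hscat, ← integral_const_mul]
  have habs_ge : ∫ p, a * f p ^ 2 ∂(ρ.prod sphereMeasure) ≤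
      ∫ p, σa p.1 * f p ^ 2 ∂(ρ.prod sphereMeasure) :=
    integral_mono_ae (hf.integrable_sq.const_mul a) habs
      ((Measure.quasiMeasurePreserving_fst.ae hσa).mono
        fun p hp => mul_le_mul_of_nonneg_right hp (sq_nonneg _))
  linarith [integral_mul_sq_sub_mul_scatK_nonneg hΦ hσs_meas hσs hf]

end RemovalOperator

theorem implicitEuler_energy_estimate_general
    (Ω : Set E3)
    (Φ : S2 → S2 → ℝ)
    (hΦmeas : Measurable (Function.uncurry Φ))
    (hΦpos : ∀ s s', 0 ≤ Φ s s')
    (hΦsymm : ∀ s s', Φ s s' = Φ s' s)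
    (hΦnorm : ∀ s, (∫ s', Φ s s' ∂sphereMeasure) = 1)
    (σa σs : E3 → ℝ) (hσs_meas : Measurable σs)
    (σa_lo σa_hi σs_hi : ℝ)
    (hσa_lo_pos : 0 < σa_lo)
    (hσs_bound : ∀ᵐ x ∂(volume : Measure E3).restrict Ω, 0 ≤ σs x ∧ σs x ≤ σs_hi)
    (hσa_bound : ∀ᵐ x ∂(volume : Measure E3).restrict Ω, σa_lo ≤ σa x ∧ σa x ≤ σa_hi)
    (Δt : ℝ) (hΔt : 0 < Δt)
    (util u : E3 × S2 → ℝ)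
    (hutil : MemLp util 2 (rteMeasure Ω)) (hu : MemLp u 2 (rteMeasure Ω))
    (heq : ∀ᵐ p ∂(rteMeasure Ω), util p + Δt * removalK Φ σa σs util p = u p) :
    ((∫ p, (util p) ^ 2 ∂(rteMeasure Ω)) + (∫ p, (util p - u p) ^ 2 ∂(rteMeasure Ω)) +
        2 * Δt * σa_lo * ∫ p, (util p) ^ 2 ∂(rteMeasure Ω) ≤
        ∫ p, (u p) ^ 2 ∂(rteMeasure Ω)) ∧
      eLpNorm util 2 (rteMeasure Ω) ≤ eLpNorm u 2 (rteMeasure Ω) := by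
  have hΦ : IsSymmetricMarkovKernel sphereMeasure Φ := ⟨hΦmeas, hΦpos, hΦsymm, hΦnorm⟩
  have hstep : ∀ᵐ p ∂(rteMeasure Ω),
      util p * (u p - util p) = Δt * (util p * removalK Φ σa σs util p) := by
    filter_upwards [heq] with p hp
    rw [← hp]; ring
  have hR : Integrable (fun p => util p * removalK Φ σa σs util p) (rteMeasure Ω) :=
    (integrable_const_mul_iff hΔt.ne'.isUnit _).1
      ((hutil.integrable_mul (hu.sub hutil)).congr hstep)
  have hcoer : σa_lo * ∫ p, util p ^ 2 ∂(rteMeasure Ω) ≤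
      ∫ p, util p * removalK Φ σa σs util p ∂(rteMeasure Ω) :=
    mul_integral_sq_le_integral_mul_removalK hΦ hσs_meas hσs_bound
      (hσa_bound.mono fun _ hx => hx.1) hutil hR
  have hcross : ∫ p, util p * (u p - util p) ∂(rteMeasure Ω) =
      Δt * ∫ p, util p * removalK Φ σa σs util p ∂(rteMeasure Ω) := by
    rw [integral_congr_ae hstep, integral_const_mul]
  have hexpand := integral_sq_expand hutil hu
  have hestimate := mul_le_mul_of_nonneg_left hcoer hΔt.le
  refine ⟨by linarith, eLpNorm_two_le_of_integral_sq_le hutil hu ?_⟩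
  have hsq : 0 ≤ ∫ p, util p ^ 2 ∂(rteMeasure Ω) := integral_nonneg fun _ => sq_nonneg _
  have hdiff : 0 ≤ ∫ p, (util p - u p) ^ 2 ∂(rteMeasure Ω) :=
    integral_nonneg fun _ => sq_nonneg _
  nlinarith [mul_pos hΔt hσa_lo_pos]

/-- energy estimate for the implicit Euler step of the angular
sub-problem: if `ũ + Δt K_σ ũ = u` then
`‖ũ‖² + ‖ũ − u‖² + 2 Δt σ̲_a ‖ũ‖² ≤ ‖u‖²`; in particular `‖ũ‖ ≤ ‖u‖`. -/
theorem implicitEuler_energy_estimate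
    (Ω : Set E3) (hΩo : IsOpen Ω) (hΩb : Bornology.IsBounded Ω)
    (Φ : S2 → S2 → ℝ)
    (hΦmeas : Measurable (Function.uncurry Φ))
    (hΦpos : ∀ s s', 0 ≤ Φ s s')
    (hΦsymm : ∀ s s', Φ s s' = Φ s' s)
    (hΦnorm : ∀ s, (∫ s', Φ s s' ∂sphereMeasure) = 1)
    (σa σs : E3 → ℝ) (hσa_meas : Measurable σa) (hσs_meas : Measurable σs)
    (σa_lo σa_hi σs_hi : ℝ)
    (hσa_lo_pos : 0 < σa_lo) (hσa_hi_pos : 0 < σa_hi) (hσs_hi_pos : 0 < σs_hi)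
    (hσs_bound : ∀ᵐ x ∂(volume : Measure E3).restrict Ω, 0 ≤ σs x ∧ σs x ≤ σs_hi)
    (hσa_bound : ∀ᵐ x ∂(volume : Measure E3).restrict Ω, σa_lo ≤ σa x ∧ σa x ≤ σa_hi)
    (Δt : ℝ) (hΔt : 0 < Δt)
    (util u : E3 × S2 → ℝ)
    (hutil : MemLp util 2 (rteMeasure Ω)) (hu : MemLp u 2 (rteMeasure Ω))
    (heq : ∀ᵐ p ∂(rteMeasure Ω), util p + Δt * removalK Φ σa σs util p = u p) :
    ((∫ p, (util p) ^ 2 ∂(rteMeasure Ω)) + (∫ p, (util p - u p) ^ 2 ∂(rteMeasure Ω)) +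
        2 * Δt * σa_lo * ∫ p, (util p) ^ 2 ∂(rteMeasure Ω) ≤
        ∫ p, (u p) ^ 2 ∂(rteMeasure Ω)) ∧
      eLpNorm util 2 (rteMeasure Ω) ≤ eLpNorm u 2 (rteMeasure Ω) :=
  implicitEuler_energy_estimate_general Ω Φ hΦmeas hΦpos hΦsymm hΦnorm σa σs hσs_meas σa_lo σa_hi
    σs_hi hσa_lo_pos hσs_bound hσa_bound Δt hΔt util u hutil hu heq
end
end

section
/- Strict contraction of the implicit Euler step: if Δt > 0 and ũ, u ∈ L²(Ω × S²) satisfy ũ + Δt K_σ ũ = u, then (1 + Δt σ̲_a) ‖ũ‖ ≤ ‖u‖, where ‖·‖ denotes the L² norm on Ω × S². -/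
/-!
Testing `ũ + Δt K_σ ũ = u` against `ũ` gives `⟪u, ũ⟫ = ‖ũ‖² + Δt ⟪K_σ ũ, ũ⟫`, so by
Cauchy–Schwarz it suffices that `K_σ` is coercive with constant `σ̲_a`. Since `σ_s ≥ 0`, this
reduces to `∫ σ_s (K v) v ≤ ∫ σ_s v²`, which holds fibrewise over `Ω`: a nonnegative symmetric
kernel with unit row integrals is a contraction of `L²(S²)` by the Schur test.
-/

open MeasureTheory Metric Real
open scoped ENNReal RealInnerProductSpace

noncomputable section

open scoped NNReal

instance inst_s10 : IsFiniteMeasure sphereMeasure :=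
  inferInstanceAs (IsFiniteMeasure (volume : Measure E3).toSphere)

section Schur

variable {α : Type*} [MeasurableSpace α] {ν : Measure α} [SFinite ν]

/-- Schur test, via `2 k a b ≤ k a² + k b²` and Tonelli. -/
theorem lintegral_kernel_mul_le_lintegral_sq {k : α → α → ℝ≥0∞}
    (hk : Measurable (Function.uncurry k))
    (hrow : ∀ s, ∫⁻ s', k s s' ∂ν ≤ 1) (hcol : ∀ s', ∫⁻ s, k s s' ∂ν ≤ 1)
    {f : α → ℝ≥0} (hf : Measurable f) :
    ∫⁻ s, (∫⁻ s', k s s' * f s' ∂ν) * f s ∂ν ≤ ∫⁻ s, (f s : ℝ≥0∞) ^ 2 ∂ν := by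
  have hcol_int : ∫⁻ s, ∫⁻ s', k s s' * f s' ^ 2 ∂ν ∂ν ≤ ∫⁻ s, (f s : ℝ≥0∞) ^ 2 ∂ν := by
    rw [lintegral_lintegral_swap (by fun_prop)]
    refine lintegral_mono fun s' => ?_
    rw [lintegral_mul_const _ (by fun_prop)]
    exact mul_le_of_le_one_left' (hcol s')
  have hrow_int : ∫⁻ s, ∫⁻ s', k s s' * f s ^ 2 ∂ν ∂ν ≤ ∫⁻ s, (f s : ℝ≥0∞) ^ 2 ∂ν := by
    refine lintegral_mono fun s => ?_
    rw [lintegral_mul_const _ (by fun_prop)]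
    exact mul_le_of_le_one_left' (hrow s)
  have hamgm : ∀ s s', 2 * (k s s' * f s' * f s) ≤ k s s' * f s' ^ 2 + k s s' * f s ^ 2 := by
    intro s s'
    have h : (2 : ℝ≥0∞) * f s' * f s ≤ f s' ^ 2 + f s ^ 2 := by
      exact_mod_cast two_mul_le_add_sq (f s') (f s)
    calc 2 * (k s s' * f s' * f s) = k s s' * (2 * f s' * f s) := by ring
      _ ≤ k s s' * (f s' ^ 2 + f s ^ 2) := by gcongr
      _ = k s s' * f s' ^ 2 + k s s' * f s ^ 2 := by ring
  refine (ENNReal.mul_le_mul_iff_right two_ne_zero ENNReal.ofNat_ne_top).1 ?_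
  calc 2 * ∫⁻ s, (∫⁻ s', k s s' * f s' ∂ν) * f s ∂ν
      = ∫⁻ s, ∫⁻ s', 2 * (k s s' * f s' * f s) ∂ν ∂ν := by
        rw [← lintegral_const_mul' _ _ ENNReal.ofNat_ne_top]
        refine lintegral_congr fun s => ?_
        rw [← lintegral_mul_const' _ _ ENNReal.coe_ne_top,
          ← lintegral_const_mul' _ _ ENNReal.ofNat_ne_top]
    _ ≤ ∫⁻ s, ∫⁻ s', (k s s' * f s' ^ 2 + k s s' * f s ^ 2) ∂ν ∂ν := by
        gcongr with s s'
        exact hamgm s s'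
    _ = ∫⁻ s, ∫⁻ s', k s s' * f s' ^ 2 ∂ν ∂ν + ∫⁻ s, ∫⁻ s', k s s' * f s ^ 2 ∂ν ∂ν := by
        rw [← lintegral_add_left]
        · exact lintegral_congr fun s => lintegral_add_left (by fun_prop) _
        · exact Measurable.lintegral_prod_right'
            (f := fun q : α × α => k q.1 q.2 * (f q.2 : ℝ≥0∞) ^ 2) (hk.mul (by fun_prop))
    _ ≤ 2 * ∫⁻ s, (f s : ℝ≥0∞) ^ 2 ∂ν := by
        rw [two_mul]
        exact add_le_add hcol_int hrow_int

end Schur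

theorem integral_le_integral_of_lintegral_enorm_le {α : Type*} [MeasurableSpace α]
    {μ : Measure α} {f g : α → ℝ} (hf : AEStronglyMeasurable f μ) (hg : Integrable g μ)
    (hg_nonneg : 0 ≤ᵐ[μ] g) (h : ∫⁻ a, ‖f a‖ₑ ∂μ ≤ ∫⁻ a, ‖g a‖ₑ ∂μ) :
    ∫ a, f a ∂μ ≤ ∫ a, g a ∂μ :=
  calc ∫ a, f a ∂μ ≤ ∫ a, ‖f a‖ ∂μ := (le_abs_self _).trans abs_integral_le_integral_abs
    _ = (∫⁻ a, ‖f a‖ₑ ∂μ).toReal := integral_norm_eq_lintegral_enorm hf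
    _ ≤ (∫⁻ a, ‖g a‖ₑ ∂μ).toReal := ENNReal.toReal_mono hg.2.ne h
    _ = ∫ a, ‖g a‖ ∂μ := (integral_norm_eq_lintegral_enorm hg.1).symm
    _ = ∫ a, g a ∂μ := integral_congr_ae (hg_nonneg.mono fun _ ha => Real.norm_of_nonneg ha)

theorem ofReal_mul_eLpNorm_le_of_le_integral_mul {α : Type*} [MeasurableSpace α]
    {μ : Measure α} {f g : α → ℝ} (hf : MemLp f 2 μ) (hg : MemLp g 2 μ) {c : ℝ}
    (h : c * ∫ a, f a * f a ∂μ ≤ ∫ a, g a * f a ∂μ) :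
    ENNReal.ofReal c * eLpNorm f 2 μ ≤ eLpNorm g 2 μ := by
  set F := hf.toLp f
  set G := hg.toLp g
  have hFF : ‖F‖ ^ 2 = ∫ a, f a * f a ∂μ := by
    rw [← real_inner_self_eq_norm_sq, L2.inner_def]
    refine integral_congr_ae ?_
    filter_upwards [hf.coeFn_toLp] with a ha
    simp [F, ha, sq]
  have hGF : ⟪G, F⟫ = ∫ a, g a * f a ∂μ := by
    rw [L2.inner_def]
    refine integral_congr_ae ?_
    filter_upwards [hf.coeFn_toLp, hg.coeFn_toLp] with a ha hb
    simp [F, G, ha, hb, mul_comm]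
  have hsq : c * ‖F‖ ^ 2 ≤ ‖G‖ * ‖F‖ := by
    rw [hFF]
    exact h.trans (hGF ▸ real_inner_le_norm G F)
  have hnorm : c * ‖F‖ ≤ ‖G‖ := by
    rcases (norm_nonneg F).eq_or_lt with h0 | h0
    · simp [← h0]
    · nlinarith
  rw [← ENNReal.ofReal_toReal hf.eLpNorm_ne_top, ← ENNReal.ofReal_toReal hg.eLpNorm_ne_top,
    ← Lp.norm_toLp f hf, ← Lp.norm_toLp g hg, ← ENNReal.ofReal_mul' (norm_nonneg _)]
  exact ENNReal.ofReal_le_ofReal hnorm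

structure IsScatteringKernel (Φ : S2 → S2 → ℝ) : Prop where
  measurable : Measurable (Function.uncurry Φ)
  nonneg : ∀ s s', 0 ≤ Φ s s'
  symm : ∀ s s', Φ s s' = Φ s' s
  integral_eq_one : ∀ s, ∫ s', Φ s s' ∂sphereMeasure = 1

theorem IsScatteringKernel.lintegral_enorm_eq_one {Φ : S2 → S2 → ℝ} (hΦ : IsScatteringKernel Φ)
    (s : S2) : ∫⁻ s', ‖Φ s s'‖ₑ ∂sphereMeasure = 1 := by
  have hint : Integrable (Φ s) sphereMeasure :=
    Integrable.of_integral_ne_zero (by simp [hΦ.integral_eq_one s])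
  rw [← ofReal_integral_norm_eq_lintegral_enorm hint]
  simp_rw [Real.norm_of_nonneg (hΦ.nonneg s _), hΦ.integral_eq_one s, ENNReal.ofReal_one]

section Transport

variable {Ω : Set E3} {Φ : S2 → S2 → ℝ} {σa σs : E3 → ℝ} {v : E3 × S2 → ℝ}

theorem ae_rteMeasure_of_ae {P : E3 → Prop} (h : ∀ᵐ x ∂(volume : Measure E3).restrict Ω, P x) :
    ∀ᵐ p ∂rteMeasure Ω, P p.1 :=
  Measure.quasiMeasurePreserving_fst.ae h

theorem scatK_ae_congr {w : E3 × S2 → ℝ} (h : v =ᵐ[rteMeasure Ω] w) :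
    scatK Φ v =ᵐ[rteMeasure Ω] scatK Φ w := by
  filter_upwards [ae_rteMeasure_of_ae (Measure.ae_ae_of_ae_prod h)] with p hp
  exact integral_congr_ae (hp.mono fun s' hs' => by simp only [hs'])

theorem removalK_ae_congr {w : E3 × S2 → ℝ} (h : v =ᵐ[rteMeasure Ω] w) :
    removalK Φ σa σs v =ᵐ[rteMeasure Ω] removalK Φ σa σs w := by
  filter_upwards [h, scatK_ae_congr (Φ := Φ) h] with p hv hK
  simp only [removalK, hv, hK]

theorem measurable_scatK (hΦ : Measurable (Function.uncurry Φ)) (hv : Measurable v) :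
    Measurable (scatK Φ v) :=
  (StronglyMeasurable.integral_prod_right'
    (f := fun q : (E3 × S2) × S2 => Φ q.1.2 q.2 * v (q.1.1, q.2))
    ((hΦ.comp (measurable_fst.snd.prodMk measurable_snd)).mul
      (hv.comp (measurable_fst.fst.prodMk measurable_snd))).stronglyMeasurable).measurable

theorem enorm_scatK_le (p : E3 × S2) :
    ‖scatK Φ v p‖ₑ ≤ ∫⁻ s', ‖Φ p.2 s'‖ₑ * ‖v (p.1, s')‖ₑ ∂sphereMeasure := by
  simpa only [scatK, enorm_mul] using enorm_integral_le_lintegral_enorm (μ := sphereMeasure)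
    (fun s' => Φ p.2 s' * v (p.1, s'))

theorem lintegral_enorm_mul_scatK_mul_le_s10 (hΦ : IsScatteringKernel Φ) {c : E3 → ℝ}
    (hc : Measurable c) (hv : Measurable v) :
    ∫⁻ p, ‖c p.1 * (scatK Φ v p * v p)‖ₑ ∂rteMeasure Ω ≤
      ∫⁻ p, ‖c p.1 * (v p * v p)‖ₑ ∂rteMeasure Ω := by
  have hkernel : Measurable (Function.uncurry fun s s' => ‖Φ s s'‖ₑ) := hΦ.measurable.enorm
  calc ∫⁻ p, ‖c p.1 * (scatK Φ v p * v p)‖ₑ ∂rteMeasure Ω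
      ≤ ∫⁻ p, ‖c p.1‖ₑ * ((∫⁻ s', ‖Φ p.2 s'‖ₑ * ‖v (p.1, s')‖ₑ ∂sphereMeasure) * ‖v p‖ₑ)
          ∂rteMeasure Ω := by
        simp only [enorm_mul]
        gcongr with p
        exact enorm_scatK_le p
    _ = ∫⁻ x, ‖c x‖ₑ * ∫⁻ s, (∫⁻ s', ‖Φ s s'‖ₑ * ‖v (x, s')‖ₑ ∂sphereMeasure) * ‖v (x, s)‖ₑ
          ∂sphereMeasure ∂(volume : Measure E3).restrict Ω := by
        rw [rteMeasure, lintegral_prod _ ?_]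
        · simp_rw [lintegral_const_mul' _ _ enorm_ne_top]
        · have hinner : Measurable fun p : E3 × S2 =>
              ∫⁻ s', ‖Φ p.2 s'‖ₑ * ‖v (p.1, s')‖ₑ ∂sphereMeasure :=
            Measurable.lintegral_prod_right'
              (f := fun q : (E3 × S2) × S2 => ‖Φ q.1.2 q.2‖ₑ * ‖v (q.1.1, q.2)‖ₑ)
              ((hkernel.comp (measurable_fst.snd.prodMk measurable_snd)).mul
                (hv.comp (measurable_fst.fst.prodMk measurable_snd)).enorm)
          exact ((hc.comp measurable_fst).enorm.mul (hinner.mul hv.enorm)).aemeasurable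
    _ ≤ ∫⁻ x, ‖c x‖ₑ * ∫⁻ s, ‖v (x, s)‖ₑ ^ 2 ∂sphereMeasure ∂(volume : Measure E3).restrict Ω := by
        refine lintegral_mono fun x => mul_le_mul_right ?_ _
        exact lintegral_kernel_mul_le_lintegral_sq hkernel
          (fun s => (hΦ.lintegral_enorm_eq_one s).le)
          (fun s' => by simp_rw [hΦ.symm _ s', (hΦ.lintegral_enorm_eq_one s').le])
          (f := fun s => ‖v (x, s)‖₊) (by fun_prop)
    _ = ∫⁻ p, ‖c p.1 * (v p * v p)‖ₑ ∂rteMeasure Ω := by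
        rw [rteMeasure, lintegral_prod _ (by fun_prop)]
        simp_rw [enorm_mul, ← sq, lintegral_const_mul' _ _ enorm_ne_top]

theorem integrable_mul_scatK_mul (hΦ : IsScatteringKernel Φ) {c : E3 → ℝ} (hc : Measurable c)
    (hv : Measurable v) (h : Integrable (fun p => c p.1 * (v p * v p)) (rteMeasure Ω)) :
    Integrable (fun p => c p.1 * (scatK Φ v p * v p)) (rteMeasure Ω) :=
  ⟨((hc.comp measurable_fst).mul ((measurable_scatK hΦ.measurable hv).mul hv)).aestronglyMeasurable,
    (lintegral_enorm_mul_scatK_mul_le_s10 hΦ hc hv).trans_lt h.2⟩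

theorem integral_mul_scatK_mul_le_s10 (hΦ : IsScatteringKernel Φ) {c : E3 → ℝ} (hc : Measurable c)
    (hc_nonneg : ∀ᵐ x ∂(volume : Measure E3).restrict Ω, 0 ≤ c x) (hv : Measurable v)
    (h : Integrable (fun p => c p.1 * (v p * v p)) (rteMeasure Ω)) :
    ∫ p, c p.1 * (scatK Φ v p * v p) ∂rteMeasure Ω ≤ ∫ p, c p.1 * (v p * v p) ∂rteMeasure Ω :=
  integral_le_integral_of_lintegral_enorm_le (integrable_mul_scatK_mul hΦ hc hv h).1 h
    ((ae_rteMeasure_of_ae hc_nonneg).mono fun _ hp => mul_nonneg hp (mul_self_nonneg _))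
    (lintegral_enorm_mul_scatK_mul_le_s10 hΦ hc hv)

theorem integrable_mul_mul_self {c : E3 → ℝ} (hc : Measurable c) {a b : ℝ}
    (hc_bdd : ∀ᵐ x ∂(volume : Measure E3).restrict Ω, a ≤ c x ∧ c x ≤ b)
    (hv : MemLp v 2 (rteMeasure Ω)) :
    Integrable (fun p => c p.1 * (v p * v p)) (rteMeasure Ω) :=
  (hv.integrable_mul hv).bdd_mul (hc.comp measurable_fst).aestronglyMeasurable
    (ae_rteMeasure_of_ae (hc_bdd.mono fun _ hx => abs_le_max_abs_abs hx.1 hx.2))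

theorem removalK_mul_self (p : E3 × S2) :
    removalK Φ σa σs v p * v p = σa p.1 * (v p * v p) + σs p.1 * (v p * v p) -
      σs p.1 * (scatK Φ v p * v p) := by
  simp only [removalK]
  ring

variable {σa_lo σa_hi σs_hi : ℝ}

theorem integrable_removalK_mul (hΦ : IsScatteringKernel Φ)
    (hσa : Measurable σa) (hσs : Measurable σs)
    (hσa_bdd : ∀ᵐ x ∂(volume : Measure E3).restrict Ω, σa_lo ≤ σa x ∧ σa x ≤ σa_hi)
    (hσs_bdd : ∀ᵐ x ∂(volume : Measure E3).restrict Ω, 0 ≤ σs x ∧ σs x ≤ σs_hi)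
    (hv : Measurable v) (hv2 : MemLp v 2 (rteMeasure Ω)) :
    Integrable (fun p => removalK Φ σa σs v p * v p) (rteMeasure Ω) := by
  have hσs_int := integrable_mul_mul_self hσs hσs_bdd hv2
  simp_rw [removalK_mul_self]
  exact ((integrable_mul_mul_self hσa hσa_bdd hv2).add hσs_int).sub
    (integrable_mul_scatK_mul hΦ hσs hv hσs_int)

theorem mul_integral_mul_self_le_integral_removalK_mul (hΦ : IsScatteringKernel Φ)
    (hσa : Measurable σa) (hσs : Measurable σs)
    (hσa_bdd : ∀ᵐ x ∂(volume : Measure E3).restrict Ω, σa_lo ≤ σa x ∧ σa x ≤ σa_hi)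
    (hσs_bdd : ∀ᵐ x ∂(volume : Measure E3).restrict Ω, 0 ≤ σs x ∧ σs x ≤ σs_hi)
    (hv : Measurable v) (hv2 : MemLp v 2 (rteMeasure Ω)) :
    σa_lo * ∫ p, v p * v p ∂rteMeasure Ω ≤
      ∫ p, removalK Φ σa σs v p * v p ∂rteMeasure Ω := by
  have hσa_int := integrable_mul_mul_self hσa hσa_bdd hv2
  have hσs_int := integrable_mul_mul_self hσs hσs_bdd hv2
  have habs : σa_lo * ∫ p, v p * v p ∂rteMeasure Ω ≤
      ∫ p, σa p.1 * (v p * v p) ∂rteMeasure Ω := by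
    rw [← integral_const_mul]
    refine integral_mono_ae ((hv2.integrable_mul hv2).const_mul σa_lo) hσa_int ?_
    filter_upwards [ae_rteMeasure_of_ae hσa_bdd] with p hp
    exact mul_le_mul_of_nonneg_right hp.1 (mul_self_nonneg _)
  have hscat := integral_mul_scatK_mul_le_s10 hΦ hσs (hσs_bdd.mono fun _ hx => hx.1) hv hσs_int
  have hsum : Integrable (fun p => σa p.1 * (v p * v p) + σs p.1 * (v p * v p)) (rteMeasure Ω) :=
    hσa_int.add hσs_int
  simp_rw [removalK_mul_self]
  rw [integral_sub hsum (integrable_mul_scatK_mul hΦ hσs hv hσs_int), integral_add hσa_int hσs_int]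
  linarith

end Transport

theorem implicitEuler_contraction_general
    (Ω : Set E3)
    (Φ : S2 → S2 → ℝ)
    (hΦmeas : Measurable (Function.uncurry Φ))
    (hΦpos : ∀ s s', 0 ≤ Φ s s')
    (hΦsymm : ∀ s s', Φ s s' = Φ s' s)
    (hΦnorm : ∀ s, (∫ s', Φ s s' ∂sphereMeasure) = 1)
    (σa σs : E3 → ℝ) (hσa_meas : Measurable σa) (hσs_meas : Measurable σs)
    (σa_lo σa_hi σs_hi : ℝ)
    (hσs_bound : ∀ᵐ x ∂(volume : Measure E3).restrict Ω, 0 ≤ σs x ∧ σs x ≤ σs_hi)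
    (hσa_bound : ∀ᵐ x ∂(volume : Measure E3).restrict Ω, σa_lo ≤ σa x ∧ σa x ≤ σa_hi)
    (Δt : ℝ) (hΔt : 0 < Δt)
    (util u : E3 × S2 → ℝ)
    (hutil : MemLp util 2 (rteMeasure Ω)) (hu : MemLp u 2 (rteMeasure Ω))
    (heq : ∀ᵐ p ∂(rteMeasure Ω), util p + Δt * removalK Φ σa σs util p = u p) :
    ENNReal.ofReal (1 + Δt * σa_lo) * eLpNorm util 2 (rteMeasure Ω) ≤
      eLpNorm u 2 (rteMeasure Ω) := by
  have hΦ : IsScatteringKernel Φ := ⟨hΦmeas, hΦpos, hΦsymm, hΦnorm⟩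
  obtain ⟨g, hg_meas, hg_ae⟩ : ∃ g, Measurable g ∧ util =ᵐ[rteMeasure Ω] g :=
    ⟨_, hutil.1.stronglyMeasurable_mk.measurable, hutil.1.ae_eq_mk⟩
  have hg : MemLp g 2 (rteMeasure Ω) := hutil.ae_eq hg_ae
  have hstep : ∀ᵐ p ∂rteMeasure Ω, g p + Δt * removalK Φ σa σs g p = u p := by
    filter_upwards [heq, hg_ae, removalK_ae_congr (Φ := Φ) (σa := σa) (σs := σs) hg_ae]
      with p hp hgp hKp
    rwa [← hgp, ← hKp]
  have hcoercive := mul_integral_mul_self_le_integral_removalK_mul hΦ hσa_meas hσs_meas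
    hσa_bound hσs_bound hg_meas hg
  have hrem := integrable_removalK_mul hΦ hσa_meas hσs_meas hσa_bound hσs_bound hg_meas hg
  have hgg : Integrable (fun p => g p * g p) (rteMeasure Ω) := hg.integrable_mul hg
  rw [eLpNorm_congr_ae hg_ae]
  refine ofReal_mul_eLpNorm_le_of_le_integral_mul hg hu ?_
  calc (1 + Δt * σa_lo) * ∫ p, g p * g p ∂rteMeasure Ω
      = ∫ p, g p * g p ∂rteMeasure Ω + Δt * (σa_lo * ∫ p, g p * g p ∂rteMeasure Ω) := by ring
    _ ≤ ∫ p, g p * g p ∂rteMeasure Ω + Δt * ∫ p, removalK Φ σa σs g p * g p ∂rteMeasure Ω := by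
        gcongr
    _ = ∫ p, u p * g p ∂rteMeasure Ω := by
        rw [← integral_const_mul, ← integral_add hgg (hrem.const_mul Δt)]
        refine integral_congr_ae ?_
        filter_upwards [hstep] with p hp
        rw [← hp]
        ring

/-- strict contraction of the implicit Euler step: if
`ũ + Δt K_σ ũ = u` then `(1 + Δt σ̲_a) ‖ũ‖ ≤ ‖u‖`. -/
theorem implicitEuler_contraction
    (Ω : Set E3) (hΩo : IsOpen Ω) (hΩb : Bornology.IsBounded Ω)
    (Φ : S2 → S2 → ℝ)
    (hΦmeas : Measurable (Function.uncurry Φ))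
    (hΦpos : ∀ s s', 0 ≤ Φ s s')
    (hΦsymm : ∀ s s', Φ s s' = Φ s' s)
    (hΦnorm : ∀ s, (∫ s', Φ s s' ∂sphereMeasure) = 1)
    (σa σs : E3 → ℝ) (hσa_meas : Measurable σa) (hσs_meas : Measurable σs)
    (σa_lo σa_hi σs_hi : ℝ)
    (hσa_lo_pos : 0 < σa_lo) (hσa_hi_pos : 0 < σa_hi) (hσs_hi_pos : 0 < σs_hi)
    (hσs_bound : ∀ᵐ x ∂(volume : Measure E3).restrict Ω, 0 ≤ σs x ∧ σs x ≤ σs_hi)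
    (hσa_bound : ∀ᵐ x ∂(volume : Measure E3).restrict Ω, σa_lo ≤ σa x ∧ σa x ≤ σa_hi)
    (Δt : ℝ) (hΔt : 0 < Δt)
    (util u : E3 × S2 → ℝ)
    (hutil : MemLp util 2 (rteMeasure Ω)) (hu : MemLp u 2 (rteMeasure Ω))
    (heq : ∀ᵐ p ∂(rteMeasure Ω), util p + Δt * removalK Φ σa σs util p = u p) :
    ENNReal.ofReal (1 + Δt * σa_lo) * eLpNorm util 2 (rteMeasure Ω) ≤
      eLpNorm u 2 (rteMeasure Ω) :=
  implicitEuler_contraction_general Ω Φ hΦmeas hΦpos hΦsymm hΦnorm σa σs hσa_meas hσs_meas σa_lo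
    σa_hi σs_hi hσs_bound hσa_bound Δt hΔt util u hutil hu heq
end
end

section
/- The Henyey–Greenstein phase function is normalized: for every anisotropy factor η ∈ (−1, 1) and every s ∈ S², ∫_{S²} (1/(4π)) · (1 − η²) · (1 + η² − 2η ⟨s, s'⟩)^{−3/2} dσ(s') = 1, where ⟨s, s'⟩ is the Euclidean inner product in ℝ³. -/
/-!
The key fact is Archimedes' hat-box theorem: for `s ∈ S²`, the image of `dσ` under
`ω ↦ ⟪s, ω⟫` is `2π` times Lebesgue measure on `[-1, 1]`. To see it, integrate
`x ↦ f (⟪s, x⟫ / ‖x‖)` over the unit ball of `ℝ³` in two ways. In polar coordinates it is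
`(1/3) ∫_{S²} f (⟪s, ω⟫) dσ(ω)`. After a reflection taking `s` to `e₀`, cylindrical
coordinates `(t, ρ)` about the `e₀`-axis and then polar coordinates `(r, θ)` in the
`(t, ρ)`-plane turn it into `(π/3) ∫_{-π}^{π} |sin θ| f (cos θ) dθ = (2π/3) ∫_{-1}^{1} f`.
For the Henyey–Greenstein kernel this leaves
`∫_{-1}^{1} (1 + η² - 2ηt)^{-3/2} dt = 2 / (1 - η²)`, with antiderivative
`η⁻¹ (1 + η² - 2ηt)^{-1/2}`.
-/

open MeasureTheory Metric Real
open scoped ENNReal RealInnerProductSpace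

noncomputable section

def henyeyGreenstein (η : ℝ) (s s' : S2) : ℝ :=
  (1 / (4 * π)) * (1 - η ^ 2) *
    (1 + η ^ 2 - 2 * η * ⟪(s : E3), (s' : E3)⟫) ^ (-(3 : ℝ) / 2)

open Set Function

namespace MeasureTheory

lemma integral_volumeIoiPow (n : ℕ) (g : ℝ → ℝ) :
    ∫ r, g r ∂Measure.volumeIoiPow n = ∫ r in Ioi 0, r ^ n * g r := by
  rw [Measure.volumeIoiPow, integral_withDensity_eq_integral_toReal_smul (by fun_prop)
      (ae_of_all _ fun _ => ENNReal.ofReal_lt_top),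
    integral_subtype_comap measurableSet_Ioi fun r => (ENNReal.ofReal (r ^ n)).toReal • g r]
  refine setIntegral_congr_fun measurableSet_Ioi fun r hr => ?_
  rw [ENNReal.toReal_ofReal (pow_nonneg (le_of_lt hr) n), smul_eq_mul]

lemma integral_fun_dir_mul_fun_norm_addHaar {E : Type*} [NormedAddCommGroup E] [NormedSpace ℝ E]
    [Nontrivial E] [FiniteDimensional ℝ E] [MeasurableSpace E] [BorelSpace E]
    (μ : Measure E) [μ.IsAddHaarMeasure] (f : E → ℝ) (g : ℝ → ℝ) :
    ∫ x, f (‖x‖⁻¹ • x) * g ‖x‖ ∂μ =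
      (∫ ω : sphere (0 : E) 1, f ω ∂μ.toSphere) *
        ∫ r in Ioi 0, r ^ (Module.finrank ℝ E - 1) * g r := by
  calc ∫ x, f (‖x‖⁻¹ • x) * g ‖x‖ ∂μ
      = ∫ x : ({0}ᶜ : Set E), f (‖x.1‖⁻¹ • x.1) * g ‖x.1‖ ∂μ.comap (↑) := by
        rw [integral_subtype_comap (measurableSet_singleton _).compl
          fun x => f (‖x‖⁻¹ • x) * g ‖x‖, restrict_compl_singleton]
    _ = ∫ p, f p.1 * g p.2 ∂μ.toSphere.prod (.volumeIoiPow (Module.finrank ℝ E - 1)) := by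
        simpa using μ.measurePreserving_homeomorphUnitSphereProd.integral_comp
          (Homeomorph.measurableEmbedding _)
          fun p : sphere (0 : E) 1 × Ioi (0 : ℝ) => f p.1 * g p.2
    _ = _ := by
        rw [integral_prod_mul (fun ω : sphere (0 : E) 1 => f ω) fun r : Ioi (0 : ℝ) => g r,
          integral_volumeIoiPow]

lemma integral_comp_inner_norm_eq_of_norm_eq {E : Type*} [NormedAddCommGroup E]
    [InnerProductSpace ℝ E] [FiniteDimensional ℝ E] [MeasurableSpace E] [BorelSpace E]
    {u v : E} (h : ‖u‖ = ‖v‖) (F : ℝ → ℝ → ℝ) : ∫ x, F ⟪u, x⟫ ‖x‖ = ∫ x, F ⟪v, x⟫ ‖x‖ := by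
  set R := Submodule.reflection (ℝ ∙ (v - u))ᗮ
  rw [← R.measurePreserving.integral_comp R.toHomeomorph.measurableEmbedding]
  refine integral_congr_ae (ae_of_all _ fun x => ?_)
  simp only [R.norm_map]
  rw [← Submodule.reflection_sub h.symm, R.inner_map_map]

lemma integrable_of_abs_le_of_eq_zero_of_lt_norm {X : Type*} [NormedAddCommGroup X]
    [ProperSpace X] [MeasurableSpace X] [BorelSpace X] {μ : Measure X} [IsFiniteMeasureOnCompacts μ]
    {F : X → ℝ} (hF : AEStronglyMeasurable F μ) {C R : ℝ} (hC : ∀ x, ‖x‖ ≤ R → |F x| ≤ C)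
    (hR : ∀ x, R < ‖x‖ → F x = 0) : Integrable F μ := by
  refine (integrableOn_iff_integrable_of_support_subset (s := closedBall 0 R)
    fun x hx => ?_).1 (Measure.integrableOn_of_bounded measure_closedBall_lt_top.ne hF
      (M := C) (ae_restrict_of_forall_mem isClosed_closedBall.measurableSet
        fun x hx => hC x (by simpa using hx)))
  by_contra hxR
  exact hx (hR x (by simpa using hxR))

end MeasureTheory

lemma EuclideanSpace.norm_fin_three (x : EuclideanSpace ℝ (Fin 3)) :
    ‖x‖ = √(x 0 ^ 2 + (x 1 ^ 2 + x 2 ^ 2)) := by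
  rw [EuclideanSpace.norm_eq, Fin.sum_univ_three]
  simp only [Real.norm_eq_abs, sq_abs, add_assoc]

lemma integral_comp_sq_add_sq (H : ℝ → ℝ) :
    ∫ q : ℝ × ℝ, H (q.1 ^ 2 + q.2 ^ 2) = π * ∫ ρ, |ρ| * H (ρ ^ 2) := by
  have even : ∫ ρ, |ρ| * H (ρ ^ 2) = 2 * ∫ ρ in Ioi 0, ρ * H (ρ ^ 2) := by
    rw [← integral_comp_abs (f := fun ρ => ρ * H (ρ ^ 2))]
    simp only [sq_abs]
  rw [even, ← integral_comp_polarCoord_symm]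
  have polar : ∀ p : ℝ × ℝ, p.1 • H ((polarCoord.symm p).1 ^ 2 + (polarCoord.symm p).2 ^ 2)
      = p.1 * H (p.1 ^ 2) * 1 := by
    rintro ⟨r, θ⟩
    simp only [polarCoord_symm_apply, smul_eq_mul, mul_one]
    congr 2
    linear_combination r ^ 2 * Real.cos_sq_add_sin_sq θ
  have htarget : polarCoord.target = Ioi (0 : ℝ) ×ˢ Ioo (-π) π := rfl
  simp_rw [polar]
  rw [htarget, Measure.volume_eq_prod, ← Measure.prod_restrict,
    integral_prod_mul (fun r => r * H (r ^ 2)) fun _ => (1 : ℝ), setIntegral_const,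
    Real.volume_real_Ioo_of_le (by linarith [Real.pi_pos]), smul_eq_mul, mul_one]
  ring

lemma integral_euclideanSpace_fin_three_eq_cylindrical (F : ℝ → ℝ → ℝ)
    (hF : Integrable fun x : EuclideanSpace ℝ (Fin 3) => F (x 0) ‖x‖) :
    ∫ x : EuclideanSpace ℝ (Fin 3), F (x 0) ‖x‖ =
      π * ∫ t, ∫ ρ, |ρ| * F t √(t ^ 2 + ρ ^ 2) := by
  let e : EuclideanSpace ℝ (Fin 3) ≃ᵐ ℝ × ℝ × ℝ :=
    (MeasurableEquiv.toLp 2 (Fin 3 → ℝ)).symm.trans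
      ((MeasurableEquiv.piFinSuccAbove (fun _ => ℝ) 0).trans
        (MeasurableEquiv.prodCongr (.refl ℝ) .finTwoArrow))
  have he : MeasurePreserving e :=
    ((MeasurePreserving.id volume).prod (volume_preserving_finTwoArrow ℝ)).comp
      ((volume_preserving_piFinSuccAbove (fun _ : Fin 3 => ℝ) 0).comp
        (PiLp.volume_preserving_ofLp (Fin 3)))
  set G : ℝ × ℝ × ℝ → ℝ := fun p => F p.1 √(p.1 ^ 2 + (p.2.1 ^ 2 + p.2.2 ^ 2))
  have hGe : (fun x => F (x 0) ‖x‖) = G ∘ e := by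
    ext x
    simp only [EuclideanSpace.norm_fin_three]
    rfl
  have hG : Integrable G := by
    rwa [hGe, he.integrable_comp_emb e.measurableEmbedding] at hF
  rw [hGe, comp_def, he.integral_comp e.measurableEmbedding, Measure.volume_eq_prod,
    integral_prod G hG, ← integral_const_mul]
  congr 1 with t
  exact integral_comp_sq_add_sq fun u => F t √(t ^ 2 + u)

lemma integral_abs_snd_mul_angular_mul_radial (f g : ℝ → ℝ) :
    ∫ p : ℝ × ℝ, |p.2| * (f ((√(p.1 ^ 2 + p.2 ^ 2))⁻¹ * p.1) * g √(p.1 ^ 2 + p.2 ^ 2)) =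
      (∫ r in Ioi 0, r ^ 2 * g r) * ∫ θ in Ioo (-π) π, |sin θ| * f (cos θ) := by
  rw [← integral_comp_polarCoord_symm]
  have htarget : polarCoord.target = Ioi (0 : ℝ) ×ˢ Ioo (-π) π := rfl
  have polar : ∀ p ∈ Ioi (0 : ℝ) ×ˢ Ioo (-π) π,
      p.1 • (|(polarCoord.symm p).2| * (f ((√((polarCoord.symm p).1 ^ 2
        + (polarCoord.symm p).2 ^ 2))⁻¹ * (polarCoord.symm p).1)
          * g √((polarCoord.symm p).1 ^ 2 + (polarCoord.symm p).2 ^ 2))) =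
      p.1 ^ 2 * g p.1 * (|sin p.2| * f (cos p.2)) := by
    rintro ⟨r, θ⟩ ⟨hr, -⟩
    have hr : 0 < r := hr
    have hnorm : √((r * cos θ) ^ 2 + (r * sin θ) ^ 2) = r := by
      rw [show (r * cos θ) ^ 2 + (r * sin θ) ^ 2 = r ^ 2 by
        linear_combination r ^ 2 * Real.cos_sq_add_sin_sq θ, Real.sqrt_sq hr.le]
    simp only [polarCoord_symm_apply, smul_eq_mul, hnorm, inv_mul_cancel_left₀ hr.ne', abs_mul,
      abs_of_pos hr]
    ring
  rw [htarget, setIntegral_congr_fun (measurableSet_Ioi.prod measurableSet_Ioo) polar,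
    Measure.volume_eq_prod, ← Measure.prod_restrict,
    integral_prod_mul (fun r => r ^ 2 * g r) fun θ => |sin θ| * f (cos θ)]

lemma integral_abs_sin_mul_comp_cos {f : ℝ → ℝ} (hf : ContinuousOn f (Icc (-1) 1)) :
    ∫ θ in Ioo (-π) π, |sin θ| * f (cos θ) = 2 * ∫ t in (-1)..1, f t := by
  have hfcos : Continuous fun θ => f (cos θ) :=
    hf.comp_continuous Real.continuous_cos Real.cos_mem_Icc
  have hint : ∀ a b : ℝ, IntervalIntegrable (fun θ => |sin θ| * f (cos θ)) volume a b :=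
    (Real.continuous_sin.abs.mul hfcos).intervalIntegrable
  have hleft : ∫ θ in (-π)..0, |sin θ| * f (cos θ) =
      ∫ θ in (0)..π, |sin θ| * f (cos θ) := by
    simpa using (intervalIntegral.integral_comp_neg (a := 0) (b := π)
      fun θ => |sin θ| * f (cos θ)).symm
  have hright : ∫ θ in (0)..π, |sin θ| * f (cos θ) = ∫ t in (-1)..1, f t := by
    have hsubst := intervalIntegral.integral_comp_mul_deriv' (a := 0) (b := π) (g := f)
      (fun θ _ => Real.hasDerivAt_cos θ) (by fun_prop)
      (hf.mono (Real.mapsTo_cos _).image_subset)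
    rw [Real.cos_zero, Real.cos_pi] at hsubst
    rw [intervalIntegral.integral_symm 1 (-1), ← hsubst, ← intervalIntegral.integral_neg]
    refine intervalIntegral.integral_congr fun θ hθ => ?_
    rw [uIcc_of_le Real.pi_pos.le] at hθ
    simp only [comp_apply, abs_of_nonneg (Real.sin_nonneg_of_nonneg_of_le_pi hθ.1 hθ.2)]
    ring
  rw [← integral_Ioc_eq_integral_Ioo, ← intervalIntegral.integral_of_le (by linarith [Real.pi_pos]),
    ← intervalIntegral.integral_add_adjacent_intervals (hint _ 0) (hint 0 _), hleft, hright]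
  ring

lemma abs_inv_mul_le_one {t r : ℝ} (h : |t| ≤ r) : |r⁻¹ * t| ≤ 1 := by
  rcases ((abs_nonneg t).trans h).eq_or_lt with rfl | hr
  · simp
  · rw [abs_mul, abs_inv, abs_of_pos hr]
    exact inv_mul_le_one_of_le₀ h hr.le

lemma integral_sq_mul_indicator_Iio_one :
    ∫ r in Ioi 0, r ^ 2 * (Iio 1).indicator 1 r = (1 / 3 : ℝ) := by
  have hind : ∀ r : ℝ, r ^ 2 * (Iio 1).indicator 1 r = (Iio 1).indicator (· ^ 2) r :=
    fun r => by by_cases hr : r < 1 <;> simp [hr]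
  simp_rw [hind]
  rw [setIntegral_indicator measurableSet_Iio, Ioi_inter_Iio, ← integral_Ioc_eq_integral_Ioo,
    ← intervalIntegral.integral_of_le zero_le_one, integral_pow]
  norm_num

/-- `x ↦ f (x₀ / ‖x‖)` on the unit ball and `0` outside, written in terms of `t = x₀`, `r = ‖x‖`. -/
def unitBallProfile (f : ℝ → ℝ) (t r : ℝ) : ℝ := f (r⁻¹ * t) * (Iio 1).indicator 1 r

section UnitBallProfile

variable {f : ℝ → ℝ}

lemma measurable_unitBallProfile (hf : Measurable f) :
    Measurable (uncurry (unitBallProfile f)) :=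
  (hf.comp (by fun_prop : Measurable fun p : ℝ × ℝ => p.2⁻¹ * p.1)).mul
    ((measurable_one.indicator measurableSet_Iio).comp measurable_snd)

lemma abs_unitBallProfile_le {C : ℝ} (hC : ∀ t ∈ Icc (-1) 1, ‖f t‖ ≤ C) {t r : ℝ}
    (h : |t| ≤ r) : |unitBallProfile f t r| ≤ C := by
  have hf := hC _ (abs_le.mp (abs_inv_mul_le_one h))
  have hw : |(Iio 1).indicator (1 : ℝ → ℝ) r| ≤ 1 := by by_cases hr : r < 1 <;> simp [hr]
  calc |unitBallProfile f t r| = ‖f (r⁻¹ * t)‖ * |(Iio 1).indicator 1 r| := abs_mul _ _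
    _ ≤ C * 1 := mul_le_mul hf hw (abs_nonneg _) ((norm_nonneg _).trans hf)
    _ = C := mul_one C

lemma unitBallProfile_of_one_lt {t r : ℝ} (hr : 1 < r) : unitBallProfile f t r = 0 := by
  simp [unitBallProfile, hr.le]

lemma integrable_unitBallProfile_euclideanSpace (hmeas : Measurable f)
    (hf : ContinuousOn f (Icc (-1) 1)) {ι : Type*} [Fintype ι] (i : ι) :
    Integrable fun x : EuclideanSpace ℝ ι => unitBallProfile f (x i) ‖x‖ := by
  obtain ⟨C, hC⟩ := isCompact_Icc.exists_bound_of_continuousOn hf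
  exact integrable_of_abs_le_of_eq_zero_of_lt_norm (R := 1)
    ((measurable_unitBallProfile hmeas).comp
      (by fun_prop : Measurable fun x : EuclideanSpace ℝ ι => (x i, ‖x‖))).aestronglyMeasurable
    (fun x _ => abs_unitBallProfile_le hC (PiLp.norm_apply_le x i))
    fun x hx => unitBallProfile_of_one_lt hx

lemma integrable_abs_snd_mul_unitBallProfile (hmeas : Measurable f)
    (hf : ContinuousOn f (Icc (-1) 1)) :
    Integrable fun p : ℝ × ℝ => |p.2| * unitBallProfile f p.1 √(p.1 ^ 2 + p.2 ^ 2) := by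
  obtain ⟨C, hC⟩ := isCompact_Icc.exists_bound_of_continuousOn hf
  have hmeas₂ : Measurable fun p : ℝ × ℝ => |p.2| * unitBallProfile f p.1 √(p.1 ^ 2 + p.2 ^ 2) :=
    measurable_snd.abs.mul ((measurable_unitBallProfile hmeas).comp
      (by fun_prop : Measurable fun p : ℝ × ℝ => (p.1, √(p.1 ^ 2 + p.2 ^ 2))))
  refine integrable_of_abs_le_of_eq_zero_of_lt_norm (C := C) (R := 1)
    hmeas₂.aestronglyMeasurable (fun p hp => ?_) fun p hp => ?_
  · rw [abs_mul, abs_abs, ← one_mul C, ← Real.norm_eq_abs]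
    exact mul_le_mul ((norm_snd_le p).trans hp) (abs_unitBallProfile_le hC
      (Real.abs_le_sqrt (le_add_of_nonneg_right (sq_nonneg _)))) (abs_nonneg _) zero_le_one
  · refine mul_eq_zero_of_right _ (unitBallProfile_of_one_lt (hp.trans_le ?_))
    rw [Prod.norm_def]
    exact max_le (Real.abs_le_sqrt (le_add_of_nonneg_right (sq_nonneg _)))
      (Real.abs_le_sqrt (le_add_of_nonneg_left (sq_nonneg _)))

end UnitBallProfile

theorem integral_sphereMeasure_comp_inner {f : ℝ → ℝ} (hmeas : Measurable f)
    (hf : ContinuousOn f (Icc (-1) 1)) (s : S2) :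
    ∫ ω, f ⟪(s : E3), (ω : E3)⟫ ∂sphereMeasure = 2 * π * ∫ t in (-1)..1, f t := by
  have hs : ‖(s : E3)‖ = ‖EuclideanSpace.single (0 : Fin 3) (1 : ℝ)‖ := by simp
  have key : (∫ ω, f ⟪(s : E3), (ω : E3)⟫ ∂sphereMeasure) * (1 / 3) =
      π * ((1 / 3) * (2 * ∫ t in (-1)..1, f t)) :=
    calc (∫ ω, f ⟪(s : E3), (ω : E3)⟫ ∂sphereMeasure) * (1 / 3)
        = ∫ x : E3, unitBallProfile f ⟪(s : E3), x⟫ ‖x‖ := by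
          have polar := integral_fun_dir_mul_fun_norm_addHaar (volume : Measure E3)
            (fun y => f ⟪(s : E3), y⟫) ((Iio 1).indicator 1)
          rw [finrank_euclideanSpace_fin, integral_sq_mul_indicator_Iio_one] at polar
          simp only [real_inner_smul_right] at polar
          exact polar.symm
      _ = ∫ x : E3, unitBallProfile f (x 0) ‖x‖ := by
          rw [integral_comp_inner_norm_eq_of_norm_eq hs]
          simp only [EuclideanSpace.inner_single_left, map_one, one_mul]
      _ = π * ∫ t, ∫ ρ, |ρ| * unitBallProfile f t √(t ^ 2 + ρ ^ 2) :=
          integral_euclideanSpace_fin_three_eq_cylindrical _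
            (integrable_unitBallProfile_euclideanSpace hmeas hf 0)
      _ = π * ((1 / 3) * (2 * ∫ t in (-1)..1, f t)) := by
          rw [← integral_sq_mul_indicator_Iio_one, ← integral_abs_sin_mul_comp_cos hf,
            ← integral_abs_snd_mul_angular_mul_radial, Measure.volume_eq_prod]
          exact congrArg (π * ·)
            (integral_prod _ (integrable_abs_snd_mul_unitBallProfile hmeas hf)).symm
  linarith

lemma henyeyGreenstein_base_pos {η t : ℝ} (hη : η ∈ Ioo (-1 : ℝ) 1)
    (ht : t ∈ Icc (-1 : ℝ) 1) : 0 < 1 + η ^ 2 - 2 * η * t := by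
  obtain ⟨hη₁, hη₂⟩ := hη
  obtain ⟨ht₁, ht₂⟩ := ht
  -- the base is affine in `t`, with values `(1 + η)²` and `(1 - η)²` at `t = ∓1`
  nlinarith [mul_nonneg (sub_nonneg.2 ht₂) (sq_nonneg (1 + η)),
    mul_nonneg (neg_le_iff_add_nonneg.1 ht₁) (sq_nonneg (1 - η)),
    mul_pos (neg_lt_iff_pos_add.1 hη₁) (sub_pos.2 hη₂)]

lemma integral_henyeyGreenstein_base_rpow {η : ℝ} (hη : η ∈ Ioo (-1 : ℝ) 1) :
    ∫ t in (-1)..1, (1 + η ^ 2 - 2 * η * t) ^ (-(3 : ℝ) / 2) = 2 / (1 - η ^ 2) := by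
  rcases eq_or_ne η 0 with rfl | hη₀
  · norm_num
  have hbase : ∀ t ∈ uIcc (-1 : ℝ) 1, 0 < 1 + η ^ 2 - 2 * η * t := fun t ht =>
    henyeyGreenstein_base_pos hη (by rwa [uIcc_of_le (by norm_num)] at ht)
  have hderiv : ∀ t ∈ uIcc (-1 : ℝ) 1,
      HasDerivAt (fun t => η⁻¹ * (1 + η ^ 2 - 2 * η * t) ^ (-(1 : ℝ) / 2))
        ((1 + η ^ 2 - 2 * η * t) ^ (-(3 : ℝ) / 2)) t := by
    intro t ht
    have hlin : HasDerivAt (fun t => 1 + η ^ 2 - 2 * η * t) (-(2 * η)) t := by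
      simpa using ((hasDerivAt_id t).const_mul (2 * η)).const_sub (1 + η ^ 2)
    refine ((hlin.rpow_const (p := -(1 : ℝ) / 2) (Or.inl (hbase t ht).ne')).const_mul
      η⁻¹).congr_deriv ?_
    rw [show -(1 : ℝ) / 2 - 1 = -(3 : ℝ) / 2 by norm_num]
    field_simp
  have hcont : ContinuousOn (fun t => (1 + η ^ 2 - 2 * η * t) ^ (-(3 : ℝ) / 2))
      (uIcc (-1) 1) :=
    (by fun_prop : Continuous fun t : ℝ => 1 + η ^ 2 - 2 * η * t).continuousOn.rpow_const
      fun t ht => Or.inl (hbase t ht).ne'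
  have hsq : ∀ a : ℝ, 0 < a → (a ^ 2) ^ (-(1 : ℝ) / 2) = a⁻¹ := fun a ha => by
    rw [← Real.rpow_natCast, ← Real.rpow_mul ha.le]
    norm_num [Real.rpow_neg_one]
  have hη₁ : 0 < 1 + η := by linarith [hη.1]
  have hη₂ : 0 < 1 - η := by linarith [hη.2]
  have hη_sq : 1 - η ^ 2 ≠ 0 := by nlinarith
  rw [intervalIntegral.integral_eq_sub_of_hasDerivAt hderiv (hcont.intervalIntegrable),
    show 1 + η ^ 2 - 2 * η * 1 = (1 - η) ^ 2 by ring,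
    show 1 + η ^ 2 - 2 * η * (-1) = (1 + η) ^ 2 by ring,
    hsq _ hη₂, hsq _ hη₁]
  field_simp
  ring

/-- the Henyey–Greenstein phase function is normalized:
`∫_{S²} Φ(s,s') dσ(s') = 1` for every `η ∈ (−1,1)` and every `s ∈ S²`. -/
theorem henyeyGreenstein_normalized
    (η : ℝ) (hη : η ∈ Set.Ioo (-1 : ℝ) 1) (s : S2) :
    (∫ s', henyeyGreenstein η s s' ∂sphereMeasure) = 1 := by
  have hmeas : Measurable fun t : ℝ => 1 / (4 * π) * (1 - η ^ 2) *
      (1 + η ^ 2 - 2 * η * t) ^ (-(3 : ℝ) / 2) := by fun_prop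
  have hcont : ContinuousOn (fun t : ℝ => 1 / (4 * π) * (1 - η ^ 2) *
      (1 + η ^ 2 - 2 * η * t) ^ (-(3 : ℝ) / 2)) (Icc (-1) 1) :=
    continuousOn_const.mul ((by fun_prop : Continuous fun t : ℝ => 1 + η ^ 2 - 2 * η * t
      ).continuousOn.rpow_const fun t ht => Or.inl (henyeyGreenstein_base_pos hη ht).ne')
  have hη_sq : 1 - η ^ 2 ≠ 0 := by nlinarith [hη.1, hη.2]
  refine (integral_sphereMeasure_comp_inner hmeas hcont s).trans ?_
  rw [intervalIntegral.integral_const_mul, integral_henyeyGreenstein_base_rpow hη]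
  field_simp
  norm_num
end
end
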